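/- Let N = q ∧ m and suppose nm − λ⌈N/2⌉ > 0. (i) If λ σ̂² ≥ d_1²(PE) + d_2²(PE), where σ̂² = ‖E‖²/(nm), then the sequence e_k := ‖E − (PE)_{2k}‖²/(nm − λk), k = 0, 1, …, ⌊N/2⌋, is nondecreasing: ‖E‖²/(nm) ≤ ‖E − (PE)_2‖²/(nm − λ) ≤ ‖E − (PE)_4‖²/(nm − 2λ) ≤ ⋯. (ii) For any 1 ≤ k ≤ r with 2k ≤ N − 2 and nm − λr > 0, if λ ≥ nm / ( ‖E − (PE)_{2k}‖² / [d_{2k+1}²(PE) + d_{2k+2}²(PE)] + k ), then ‖E − (PE)_{2k}‖²/(nm − λk) ≤ ‖E − (PE)_{2r ∧ N}‖²/(nm − λr). -/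

import Mathlib

open scoped BigOperators NNReal ENNReal
open Classical MeasureTheory ProbabilityTheory

noncomputable section

/-- Squared Frobenius (Hilbert–Schmidt) norm of a real matrix. -/
def frob2 {n m : ℕ} (M : Matrix (Fin n) (Fin m) ℝ) : ℝ :=
  ∑ i, ∑ j, (M i j) ^ 2

/-- `sval M k` is the `k`-th largest singular value of `M` (1-based indexing),
i.e. the square root of the `k`-th largest eigenvalue of `Mᴴ * M`; by convention
it is `0` for `k = 0` and for `k > m`. -/
def sval {n m : ℕ} (M : Matrix (Fin n) (Fin m) ℝ) (k : ℕ) : ℝ :=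
  if h : 1 ≤ k ∧ k ≤ m then
    Real.sqrt ((show (M.transpose * M).IsHermitian by
      simpa using Matrix.isHermitian_conjTranspose_mul_self M).eigenvalues
      (Tuple.sort (show (M.transpose * M).IsHermitian by
      simpa using Matrix.isHermitian_conjTranspose_mul_self M).eigenvalues ⟨m - k, by omega⟩))
  else 0

/-- A best rank-`k` approximation of `M` in Frobenius norm (rank-`k` truncated SVD),
with the convention that the rank-`0` truncation is `0`. -/
def trunc {n m : ℕ} (M : Matrix (Fin n) (Fin m) ℝ) (k : ℕ) :
    Matrix (Fin n) (Fin m) ℝ :=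
  if k = 0 then 0
  else Classical.epsilon fun B : Matrix (Fin n) (Fin m) ℝ =>
    B.rank ≤ k ∧ ∀ C : Matrix (Fin n) (Fin m) ℝ, C.rank ≤ k → frob2 (M - B) ≤ frob2 (M - C)

/-- `K_λ = ⌊(nm-1)/λ⌋ ∧ q ∧ m`. -/
def Kfun (n m q : ℕ) (lam : ℝ) : ℕ :=
  min (min (Nat.floor ((((n * m : ℕ) : ℝ) - 1) / lam)) q) m

/-- `σ̂_k² = ‖Y - (PY)_k‖² / (nm - λ k)`. -/
def sighat2 {n m : ℕ} (Y : Matrix (Fin n) (Fin m) ℝ)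
    (P : Matrix (Fin n) (Fin n) ℝ) (lam : ℝ) (k : ℕ) : ℝ :=
  frob2 (Y - trunc (P * Y) k) / (((n * m : ℕ) : ℝ) - lam * k)

/-- The selected rank `k̂ = ∑_{k=1}^{K_λ} 1{d_k²(PY) ≥ λ σ̂_k²}`,
which minimizes `σ̂_k²` over `{0, 1, …, K_λ}`. -/
def khat {n m : ℕ} (Y : Matrix (Fin n) (Fin m) ℝ)
    (P : Matrix (Fin n) (Fin n) ℝ) (q : ℕ) (lam : ℝ) : ℕ :=
  ∑ k ∈ Finset.Icc 1 (Kfun n m q lam),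
    if lam * sighat2 Y P lam k ≤ (sval (P * Y) k) ^ 2 then 1 else 0

/-! The key identity is `‖E - (PE)_s‖² = ‖E‖² - ∑_{t ≤ s} d_t²(PE)`. By Eckart–Young (Ky Fan's
lower bound plus the truncated SVD as witness) it holds for `P = 1`; in general a best
approximation of `PE` lies in the range of `P`, and Pythagoras along `P` reduces to that case.

With `T_j` the sum of the `2j` largest squared singular values, the ratio
`e_j = (‖E‖² - T_j) / (nm - λ j)` satisfies `e_j ≤ e_{j+1}` as soon as `T_{j+1} - T_j ≤ λ e_j`.
In (i) every increment is at most `d_1² + d_2² ≤ λ e_0`, in (ii) at most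
`d_{2k+1}² + d_{2k+2}² ≤ λ e_k`, and monotonicity of `e` then propagates by induction. -/

open Matrix Finset

section Frobenius

variable {n m p : ℕ}

lemma frob2_nonneg (X : Matrix (Fin n) (Fin m) ℝ) : 0 ≤ frob2 X := by
  unfold frob2; positivity

lemma frob2_eq_trace (X : Matrix (Fin n) (Fin m) ℝ) : frob2 X = trace (Xᵀ * X) := by
  simp only [frob2, trace, Matrix.diag, mul_apply, transpose_apply, sq]
  exact Finset.sum_comm

lemma frob2_eq_zero_iff {X : Matrix (Fin n) (Fin m) ℝ} : frob2 X = 0 ↔ X = 0 := by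
  rw [frob2_eq_trace, ← conjTranspose_eq_transpose_of_trivial,
    trace_conjTranspose_mul_self_eq_zero_iff]

lemma frob2_transpose (X : Matrix (Fin n) (Fin m) ℝ) : frob2 Xᵀ = frob2 X :=
  Finset.sum_comm

lemma frob2_add_of_trace_transpose_mul_eq_zero {Y Z : Matrix (Fin n) (Fin m) ℝ}
    (h : trace (Yᵀ * Z) = 0) : frob2 (Y + Z) = frob2 Y + frob2 Z := by
  have h' : trace (Zᵀ * Y) = 0 := by rw [← trace_transpose, transpose_mul, transpose_transpose, h]
  simp only [frob2_eq_trace, transpose_add, Matrix.add_mul, Matrix.mul_add, trace_add, h, h']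
  ring

lemma frob2_eq_frob2_mul_add {P : Matrix (Fin n) (Fin n) ℝ} (hPt : Pᵀ = P) (hP2 : P * P = P)
    (X : Matrix (Fin n) (Fin m) ℝ) : frob2 X = frob2 (P * X) + frob2 (X - P * X) := by
  have h : trace ((P * X)ᵀ * (X - P * X)) = 0 := by
    rw [transpose_mul, hPt, Matrix.mul_assoc, Matrix.mul_sub, ← Matrix.mul_assoc P P, hP2,
      sub_self, Matrix.mul_zero, trace_zero]
  rw [← frob2_add_of_trace_transpose_mul_eq_zero h, add_sub_cancel]

lemma frob2_mul_of_transpose_mul_self {U : Matrix (Fin n) (Fin p) ℝ} (hU : Uᵀ * U = 1)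
    (Y : Matrix (Fin p) (Fin m) ℝ) : frob2 (U * Y) = frob2 Y := by
  rw [frob2_eq_trace, frob2_eq_trace, transpose_mul, Matrix.mul_assoc, ← Matrix.mul_assoc Uᵀ, hU,
    Matrix.one_mul]

lemma frob2_mul_of_mul_transpose_self {U : Matrix (Fin p) (Fin m) ℝ} (hU : U * Uᵀ = 1)
    (X : Matrix (Fin n) (Fin p) ℝ) : frob2 (X * U) = frob2 X := by
  rw [← frob2_transpose, transpose_mul, frob2_mul_of_transpose_mul_self (by simpa using hU),
    frob2_transpose]

lemma frob2_mul_le_of_transpose_mul_self {U : Matrix (Fin m) (Fin p) ℝ} (hU : Uᵀ * U = 1)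
    (X : Matrix (Fin n) (Fin m) ℝ) : frob2 (X * U) ≤ frob2 X := by
  have hR : (U * Uᵀ) * (U * Uᵀ) = U * Uᵀ := by
    rw [Matrix.mul_assoc, ← Matrix.mul_assoc Uᵀ, hU, Matrix.one_mul]
  calc frob2 (X * U) = frob2 (U * (Uᵀ * Xᵀ)) := by
        rw [frob2_mul_of_transpose_mul_self hU, ← transpose_mul, frob2_transpose]
    _ ≤ frob2 Xᵀ := by
        rw [frob2_eq_frob2_mul_add (by simp) hR Xᵀ, Matrix.mul_assoc]
        exact le_add_of_nonneg_right (frob2_nonneg _)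
    _ = frob2 X := frob2_transpose X

lemma sum_sq_row_le_one_of_transpose_mul_self {W : Matrix (Fin m) (Fin p) ℝ} (hW : Wᵀ * W = 1)
    (i : Fin m) : ∑ j, W i j ^ 2 ≤ 1 := by
  let e : Matrix (Fin 1) (Fin m) ℝ := of fun _ k => if k = i then 1 else 0
  have h := frob2_mul_le_of_transpose_mul_self hW e
  simpa [frob2, e, mul_apply] using h

lemma frob2_of_transpose_mul_self {W : Matrix (Fin m) (Fin p) ℝ} (hW : Wᵀ * W = 1) :
    frob2 W = p := by
  simp [frob2_eq_trace, hW]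

lemma trace_transpose_mul_diagonal_mul (d : Fin m → ℝ) (W : Matrix (Fin m) (Fin p) ℝ) :
    trace (Wᵀ * diagonal d * W) = ∑ i, d i * ∑ j, W i j ^ 2 := by
  simp only [trace, Matrix.diag, mul_apply, transpose_apply, diagonal_apply, mul_ite, mul_zero,
    Finset.sum_ite_eq', Finset.mem_univ, if_true, Finset.mul_sum]
  rw [Finset.sum_comm]
  exact Finset.sum_congr rfl fun _ _ => Finset.sum_congr rfl fun _ _ => by ring

end Frobenius

section GramSpectrum

variable {n m : ℕ} (M : Matrix (Fin n) (Fin m) ℝ)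

lemma isHermitian_transpose_mul_self : (Mᵀ * M).IsHermitian := by
  simpa using isHermitian_conjTranspose_mul_self M

/-- The permutation listing the eigenvalues of `Mᵀ * M` in nonincreasing order. -/
def gramEigOrder : Equiv.Perm (Fin m) :=
  Fin.revPerm.trans (Tuple.sort (isHermitian_transpose_mul_self M).eigenvalues)

def gramEig (i : Fin m) : ℝ :=
  (isHermitian_transpose_mul_self M).eigenvalues (gramEigOrder M i)

def gramEigvecs : Matrix (Fin m) (Fin m) ℝ :=
  ((isHermitian_transpose_mul_self M).eigenvectorUnitary : Matrix (Fin m) (Fin m) ℝ).submatrix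
    id (gramEigOrder M)

lemma gramEig_nonneg (i : Fin m) : 0 ≤ gramEig M i := by
  have h : (Mᵀ * M).PosSemidef := by simpa using posSemidef_conjTranspose_mul_self M
  exact h.eigenvalues_nonneg _

lemma gramEig_antitone : Antitone (gramEig M) := fun _ _ hij =>
  Tuple.monotone_sort (isHermitian_transpose_mul_self M).eigenvalues (Fin.rev_le_rev.mpr hij)

lemma gramEigvecs_transpose_mul_self : (gramEigvecs M)ᵀ * gramEigvecs M = 1 := by
  have h := ((isHermitian_transpose_mul_self M).eigenvectorUnitary).2
  rw [mem_unitaryGroup_iff', star_eq_conjTranspose, conjTranspose_eq_transpose_of_trivial] at h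
  rw [gramEigvecs, transpose_submatrix, ← submatrix_mul _ _ _ id _ Function.bijective_id, h,
    submatrix_one_equiv]

lemma gramEigvecs_mul_transpose_self : gramEigvecs M * (gramEigvecs M)ᵀ = 1 := by
  have h := ((isHermitian_transpose_mul_self M).eigenvectorUnitary).2
  rw [mem_unitaryGroup_iff, star_eq_conjTranspose, conjTranspose_eq_transpose_of_trivial] at h
  rw [gramEigvecs, transpose_submatrix, submatrix_mul_equiv, h, submatrix_id_id]

lemma gramEigvecs_transpose_mul_gram_mul :
    (gramEigvecs M)ᵀ * (Mᵀ * M) * gramEigvecs M = diagonal (gramEig M) := by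
  have h := (isHermitian_transpose_mul_self M).conjStarAlgAut_star_eigenvectorUnitary
  simp only [Unitary.conjStarAlgAut_apply, Unitary.coe_star, star_eq_conjTranspose,
    conjTranspose_eq_transpose_of_trivial, transpose_transpose] at h
  rw [gramEigvecs, transpose_submatrix]
  generalize ((isHermitian_transpose_mul_self M).eigenvectorUnitary : Matrix (Fin m) (Fin m) ℝ) = U
    at h ⊢
  rw [← submatrix_id_id (Mᵀ * M), ← submatrix_mul _ _ _ _ _ Function.bijective_id,
    ← submatrix_mul _ _ _ _ _ Function.bijective_id, h, submatrix_diagonal_equiv]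
  rfl

lemma frob2_mul_gramEigvecs_mul {p : ℕ} (W : Matrix (Fin m) (Fin p) ℝ) :
    frob2 (M * gramEigvecs M * W) = ∑ i, gramEig M i * ∑ j, W i j ^ 2 := by
  rw [frob2_eq_trace, ← trace_transpose_mul_diagonal_mul, ← gramEigvecs_transpose_mul_gram_mul]
  simp only [transpose_mul, Matrix.mul_assoc]

lemma frob2_eq_sum_gramEig : frob2 M = ∑ i, gramEig M i := by
  have h := frob2_mul_gramEigvecs_mul M (1 : Matrix (Fin m) (Fin m) ℝ)
  rw [Matrix.mul_one, frob2_mul_of_mul_transpose_self (gramEigvecs_mul_transpose_self M)] at h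
  simpa [one_apply, sq] using h

end GramSpectrum

section SingularValues

variable {n m : ℕ} (M : Matrix (Fin n) (Fin m) ℝ)

lemma sval_sq_succ {t : ℕ} (ht : t < m) : sval M (t + 1) ^ 2 = gramEig M ⟨t, ht⟩ := by
  rw [sval, dif_pos ⟨by omega, by omega⟩, Real.sq_sqrt]
  · rfl
  · exact gramEig_nonneg M ⟨t, ht⟩

lemma sval_of_lt {k : ℕ} (hk : m < k) : sval M k = 0 := by
  rw [sval, dif_neg (by omega)]

lemma sval_sq_le_sval_sq {k l : ℕ} (hk : 1 ≤ k) (hkl : k ≤ l) : sval M l ^ 2 ≤ sval M k ^ 2 := by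
  obtain ⟨k, rfl⟩ : ∃ k', k = k' + 1 := ⟨k - 1, by omega⟩
  obtain ⟨l, rfl⟩ : ∃ l', l = l' + 1 := ⟨l - 1, by omega⟩
  by_cases hl : l < m
  · rw [sval_sq_succ M hl, sval_sq_succ M (by omega)]
    exact gramEig_antitone M (Fin.mk_le_mk.mpr (by omega))
  · rw [sval_of_lt M (by omega)]
    simp [sq_nonneg]

def sumTopSvalSq (s : ℕ) : ℝ := ∑ t ∈ range s, sval M (t + 1) ^ 2

lemma sumTopSvalSq_mono : Monotone (sumTopSvalSq M) := fun _ _ h =>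
  Finset.sum_le_sum_of_subset_of_nonneg (range_subset_range.mpr h) fun _ _ _ => sq_nonneg _

lemma sumTopSvalSq_two_mul_succ (j : ℕ) :
    sumTopSvalSq M (2 * (j + 1)) =
      sumTopSvalSq M (2 * j) + sval M (2 * j + 1) ^ 2 + sval M (2 * j + 2) ^ 2 := by
  rw [sumTopSvalSq, show 2 * (j + 1) = 2 * j + 1 + 1 by ring, sum_range_succ, sum_range_succ]
  rfl

lemma sumTopSvalSq_min_two_mul_succ_sub_le (N j : ℕ) :
    sumTopSvalSq M (min (2 * (j + 1)) N) - sumTopSvalSq M (min (2 * j) N) ≤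
      sval M (2 * j + 1) ^ 2 + sval M (2 * j + 2) ^ 2 := by
  rcases lt_or_ge (2 * j) N with hj | hj
  · rw [min_eq_left hj.le]
    linarith [sumTopSvalSq_mono M (min_le_left (2 * (j + 1)) N), sumTopSvalSq_two_mul_succ M j]
  · rw [min_eq_right hj, min_eq_right (by omega), sub_self]
    positivity

lemma sumTopSvalSq_eq_sum_gramEig (s : ℕ) :
    sumTopSvalSq M s = ∑ i : Fin m, if (i : ℕ) < s then gramEig M i else 0 := by
  set f : ℕ → ℝ := fun t => sval M (t + 1) ^ 2
  have hf : ∀ t, m ≤ t → f t = 0 := fun t ht => by simp [f, sval_of_lt M (show m < t + 1 by omega)]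
  calc sumTopSvalSq M s = ∑ t ∈ range (min s m), f t :=
        (Finset.sum_subset (range_subset_range.mpr (min_le_left _ _))
          fun t ht hnt => hf t (by simp only [mem_range] at ht hnt; omega)).symm
    _ = ∑ t ∈ range m, if t < s then f t else 0 := by
        rw [← Finset.sum_filter]
        congr 1
        ext t
        simp only [mem_range, mem_filter]
        omega
    _ = ∑ i : Fin m, if (i : ℕ) < s then f i else 0 :=
        (Fin.sum_univ_eq_sum_range (fun t => if t < s then f t else 0) m).symm
    _ = _ := Finset.sum_congr rfl fun i _ => by simp only [f, sval_sq_succ M i.isLt]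

lemma frob2_sub_sumTopSvalSq (s : ℕ) :
    frob2 M - sumTopSvalSq M s = ∑ i : Fin m, if s ≤ (i : ℕ) then gramEig M i else 0 := by
  rw [frob2_eq_sum_gramEig, sumTopSvalSq_eq_sum_gramEig, ← Finset.sum_sub_distrib]
  refine Finset.sum_congr rfl fun i _ => ?_
  split_ifs <;> first | omega | ring

end SingularValues

section EckartYoung

variable {n m : ℕ}

lemma sum_ite_le_sum_mul_of_antitone {a τ : Fin m → ℝ} {s : ℕ} (hs : s < m) (ha : Antitone a)
    (hτ0 : ∀ i, 0 ≤ τ i) (hτ1 : ∀ i, τ i ≤ 1) (hτ : ∑ i, τ i = ((m - s : ℕ) : ℝ)) :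
    ∑ i : Fin m, (if s ≤ (i : ℕ) then a i else 0) ≤ ∑ i, a i * τ i := by
  set θ := a ⟨s, hs⟩
  have hcount : ∑ i : Fin m, (if s ≤ (i : ℕ) then (1 : ℝ) else 0) = ((m - s : ℕ) : ℝ) := by
    rw [Finset.sum_boole]
    have h := Finset.card_filter_add_card_filter_not (s := univ) (fun i : Fin m => (i : ℕ) < s)
    simp only [Fin.card_filter_val_lt, card_univ, Fintype.card_fin, not_lt] at h
    rw [show #{i : Fin m | s ≤ (i : ℕ)} = m - s by omega]
  -- `θ` separates the entries of `a` below position `s` from those above it.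
  have key : ∀ i : Fin m, θ * (τ i - if s ≤ (i : ℕ) then 1 else 0) ≤
      a i * τ i - if s ≤ (i : ℕ) then a i else 0 := by
    intro i
    split_ifs with hi
    · have : a i ≤ θ := ha (Fin.mk_le_mk.mpr hi)
      nlinarith [hτ1 i]
    · have : θ ≤ a i := ha (Fin.mk_le_mk.mpr (by omega))
      nlinarith [hτ0 i]
  have hθ : ∑ i : Fin m, θ * (τ i - if s ≤ (i : ℕ) then 1 else 0) = 0 := by
    rw [← Finset.mul_sum, Finset.sum_sub_distrib, hτ, hcount, sub_self, mul_zero]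
  have := Finset.sum_le_sum fun i (_ : i ∈ univ) => key i
  rw [hθ, Finset.sum_sub_distrib] at this
  linarith

lemma exists_transpose_mul_self_eq_one_mul_eq_zero (C : Matrix (Fin n) (Fin m) ℝ) {s : ℕ}
    (hC : C.rank ≤ s) : ∃ U : Matrix (Fin m) (Fin (m - s)) ℝ, Uᵀ * U = 1 ∧ C * U = 0 := by
  let φ : (Fin m → ℝ) ≃ₗ[ℝ] EuclideanSpace ℝ (Fin m) := (WithLp.linearEquiv 2 ℝ (Fin m → ℝ)).symm
  let K : Submodule ℝ (EuclideanSpace ℝ (Fin m)) := (LinearMap.ker C.mulVecLin).map φ.toLinearMap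
  have hK : m - s ≤ Module.finrank ℝ K := by
    have h1 : Module.finrank ℝ K = Module.finrank ℝ (LinearMap.ker C.mulVecLin) :=
      LinearEquiv.finrank_map_eq φ _
    have h2 := LinearMap.finrank_range_add_finrank_ker C.mulVecLin
    have h3 : Module.finrank ℝ (LinearMap.range C.mulVecLin) ≤ s := hC
    rw [Module.finrank_fin_fun] at h2
    omega
  let b := stdOrthonormalBasis ℝ K
  let u : Fin (m - s) → EuclideanSpace ℝ (Fin m) := fun j => (b (Fin.castLE hK j) : K)
  have hker : ∀ j, C *ᵥ (u j) = 0 := by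
    intro j
    obtain ⟨y, hy, hyu⟩ := (b (Fin.castLE hK j)).2
    have : (u j).ofLp = y := by simp [u, ← hyu, φ]
    rw [this]
    exact hy
  have horth : ∀ i j, ∑ a, u i a * u j a = if i = j then 1 else 0 := by
    intro i j
    have hb := orthonormal_iff_ite.mp b.orthonormal (Fin.castLE hK i) (Fin.castLE hK j)
    simp only [Submodule.coe_inner, PiLp.inner_apply, RCLike.inner_apply, conj_trivial,
      Fin.castLE_inj] at hb
    rw [← hb]
    exact Finset.sum_congr rfl fun a _ => mul_comm _ _
  refine ⟨of fun a j => u j a, ?_, ?_⟩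
  · ext i j
    simpa [mul_apply, one_apply] using horth i j
  · ext a j
    simpa [mul_apply, mulVec, dotProduct] using congrFun (hker j) a

/-- Ky Fan: `ker C` contains `m - s` orthonormal vectors `u_j`, on which `M - C` agrees with `M`,
and `∑ ‖M u_j‖²` is at least the sum of the `m - s` smallest eigenvalues of `Mᵀ M`. -/
lemma frob2_sub_sumTopSvalSq_le (M C : Matrix (Fin n) (Fin m) ℝ) {s : ℕ} (hC : C.rank ≤ s) :
    frob2 M - sumTopSvalSq M s ≤ frob2 (M - C) := by
  rw [frob2_sub_sumTopSvalSq]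
  rcases le_or_gt m s with hms | hsm
  · rw [Finset.sum_eq_zero fun i _ => if_neg (by omega)]
    exact frob2_nonneg _
  obtain ⟨U, hU, hCU⟩ := exists_transpose_mul_self_eq_one_mul_eq_zero C hC
  set V := gramEigvecs M
  set W := Vᵀ * U
  have hW : Wᵀ * W = 1 := by
    rw [transpose_mul, transpose_transpose, Matrix.mul_assoc, ← Matrix.mul_assoc V,
      gramEigvecs_mul_transpose_self, Matrix.one_mul, hU]
  calc ∑ i : Fin m, (if s ≤ (i : ℕ) then gramEig M i else 0)
      ≤ ∑ i, gramEig M i * ∑ j, W i j ^ 2 :=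
        sum_ite_le_sum_mul_of_antitone hsm (gramEig_antitone M)
          (fun _ => by positivity) (sum_sq_row_le_one_of_transpose_mul_self hW)
          (by simpa [frob2] using frob2_of_transpose_mul_self hW)
    _ = frob2 ((M - C) * U) := by
        rw [← frob2_mul_gramEigvecs_mul, Matrix.sub_mul, hCU, sub_zero, Matrix.mul_assoc,
          ← Matrix.mul_assoc V, gramEigvecs_mul_transpose_self, Matrix.one_mul]
    _ ≤ frob2 (M - C) := frob2_mul_le_of_transpose_mul_self hU _

end EckartYoung

section Truncation

variable {n m : ℕ}

lemma rank_diagonal_ite_val_lt_le (s : ℕ) :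
    (diagonal fun i : Fin m => if (i : ℕ) < s then (1 : ℝ) else 0).rank ≤ s := by
  rw [rank_diagonal, Fintype.card_subtype]
  calc #{i : Fin m | (if (i : ℕ) < s then (1 : ℝ) else 0) ≠ 0} = #{i : Fin m | (i : ℕ) < s} := by
        congr 1; ext i; simp
    _ ≤ s := by rw [Fin.card_filter_val_lt]; exact min_le_right _ _

/-- The witness `M V D Vᵀ` keeps the `s` leading right singular directions of `M`. -/
lemma exists_rank_le_frob2_sub_eq (M : Matrix (Fin n) (Fin m) ℝ) (s : ℕ) :
    ∃ B : Matrix (Fin n) (Fin m) ℝ, B.rank ≤ s ∧ frob2 (M - B) = frob2 M - sumTopSvalSq M s := by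
  set V := gramEigvecs M
  set D : Matrix (Fin m) (Fin m) ℝ := diagonal fun i => if (i : ℕ) < s then 1 else 0
  set D' : Matrix (Fin m) (Fin m) ℝ := diagonal fun i => if s ≤ (i : ℕ) then 1 else 0
  have hDD' : D + D' = 1 := by
    rw [diagonal_add, ← diagonal_one]
    congr 1
    funext i
    split_ifs <;> first | omega | norm_num
  have hsplit : M - M * V * D * Vᵀ = M * V * D' * Vᵀ := by
    rw [sub_eq_iff_eq_add', ← Matrix.add_mul, ← Matrix.mul_add, hDD', Matrix.mul_one,
      Matrix.mul_assoc, gramEigvecs_mul_transpose_self, Matrix.mul_one]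
  refine ⟨M * V * D * Vᵀ, ?_, ?_⟩
  · calc (M * V * D * Vᵀ).rank ≤ (M * V * D).rank := rank_mul_le_left _ _
      _ ≤ D.rank := rank_mul_le_right _ _
      _ ≤ s := rank_diagonal_ite_val_lt_le s
  · rw [hsplit, frob2_mul_of_mul_transpose_self (by
      rw [transpose_transpose, gramEigvecs_transpose_mul_self]), frob2_mul_gramEigvecs_mul,
      frob2_sub_sumTopSvalSq]
    refine Finset.sum_congr rfl fun i _ => ?_
    simp only [D', diagonal_apply]
    split_ifs <;> simp_all

lemma trunc_spec (M : Matrix (Fin n) (Fin m) ℝ) {s : ℕ} (hs : s ≠ 0) :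
    (trunc M s).rank ≤ s ∧
      ∀ C : Matrix (Fin n) (Fin m) ℝ, C.rank ≤ s → frob2 (M - trunc M s) ≤ frob2 (M - C) := by
  obtain ⟨B, hB, hMB⟩ := exists_rank_le_frob2_sub_eq M s
  rw [trunc, if_neg hs]
  exact Classical.epsilon_spec (p := fun B : Matrix (Fin n) (Fin m) ℝ =>
    B.rank ≤ s ∧ ∀ C : Matrix (Fin n) (Fin m) ℝ, C.rank ≤ s → frob2 (M - B) ≤ frob2 (M - C))
    ⟨B, hB, fun C hC => hMB ▸ frob2_sub_sumTopSvalSq_le M C hC⟩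

theorem frob2_sub_trunc (M : Matrix (Fin n) (Fin m) ℝ) (s : ℕ) :
    frob2 (M - trunc M s) = frob2 M - sumTopSvalSq M s := by
  rcases eq_or_ne s 0 with rfl | hs
  · simp [trunc, sumTopSvalSq]
  obtain ⟨B, hB, hMB⟩ := exists_rank_le_frob2_sub_eq M s
  obtain ⟨htrunc, hmin⟩ := trunc_spec M hs
  exact le_antisymm (hMB ▸ hmin B hB) (frob2_sub_sumTopSvalSq_le M _ htrunc)

lemma mul_trunc_mul_of_isProj {P : Matrix (Fin n) (Fin n) ℝ} (hPt : Pᵀ = P) (hP2 : P * P = P)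
    (E : Matrix (Fin n) (Fin m) ℝ) (s : ℕ) :
    P * trunc (P * E) s = trunc (P * E) s := by
  rcases eq_or_ne s 0 with rfl | hs
  · simp [trunc]
  set B := trunc (P * E) s
  obtain ⟨hB, hmin⟩ := trunc_spec (P * E) hs
  -- `P * B` is as close to `P * E` as `B`, and strictly closer unless `P * B = B`.
  have hsplit := frob2_eq_frob2_mul_add hPt hP2 (P * E - B)
  rw [Matrix.mul_sub, ← Matrix.mul_assoc, hP2, sub_sub_sub_cancel_left] at hsplit
  have hle := hmin (P * B) ((rank_mul_le_right P B).trans hB)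
  have hzero : frob2 (P * B - B) = 0 := le_antisymm (by linarith) (frob2_nonneg _)
  rw [← sub_eq_zero, ← frob2_eq_zero_iff.mp hzero]

lemma frob2_sub_trunc_mul_of_isProj {P : Matrix (Fin n) (Fin n) ℝ} (hPt : Pᵀ = P)
    (hP2 : P * P = P) (E : Matrix (Fin n) (Fin m) ℝ) (s : ℕ) :
    frob2 (E - trunc (P * E) s) = frob2 E - sumTopSvalSq (P * E) s := by
  have hE := frob2_eq_frob2_mul_add hPt hP2 E
  have hEB := frob2_eq_frob2_mul_add hPt hP2 (E - trunc (P * E) s)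
  rw [Matrix.mul_sub, mul_trunc_mul_of_isProj hPt hP2, sub_sub_sub_cancel_right] at hEB
  linarith [frob2_sub_trunc (P * E) s]

end Truncation

section RatioChain

variable {N lam F : ℝ}

/-- One step of the monotonicity of `e j = (F - T j) / (N - lam * j)`, with `a = N - lam * j`. -/
lemma div_le_div_sub_of_sub_le {T T' a : ℝ} (hlam : 0 ≤ lam) (ha : 0 < a - lam)
    (h : T' - T ≤ lam * ((F - T) / a)) : (F - T) / a ≤ (F - T') / (a - lam) := by
  have ha' : a ≠ 0 := by linarith
  rw [le_div_iff₀ ha]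
  have : (F - T) / a * a = F - T := div_mul_cancel₀ _ ha'
  nlinarith

lemma div_le_div_of_increments_le {T : ℕ → ℝ} {k l : ℕ} (hlam : 0 ≤ lam) (hkl : k ≤ l)
    (hl : 0 < N - lam * l)
    (hstep : ∀ j, k ≤ j → j < l → T (j + 1) - T j ≤ lam * ((F - T k) / (N - lam * k))) :
    (F - T k) / (N - lam * k) ≤ (F - T l) / (N - lam * l) := by
  induction l, hkl using Nat.le_induction with
  | base => exact le_rfl
  | succ l hkl ih =>
    push_cast at hl
    have hkl' := ih (by nlinarith) fun j hj hjl => hstep j hj (by omega)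
    refine hkl'.trans ?_
    rw [Nat.cast_succ, mul_add, mul_one, ← sub_sub]
    exact div_le_div_sub_of_sub_le hlam (by linarith)
      ((hstep l hkl (by omega)).trans (mul_le_mul_of_nonneg_left hkl' hlam))

lemma le_mul_div_of_div_add_le {G Δ k : ℝ} (hlam : 0 ≤ lam) (hG : 0 ≤ G) (hΔ : 0 ≤ Δ)
    (hk : 0 < k) (hN : 0 < N - lam * k) (h : N / (G / Δ + k) ≤ lam) :
    Δ ≤ lam * (G / (N - lam * k)) := by
  rcases hΔ.eq_or_lt with rfl | hΔ
  · positivity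
  have hGΔ : 0 ≤ G / Δ := div_nonneg hG hΔ.le
  rw [div_le_iff₀ (by linarith), mul_add] at h
  rw [← mul_div_assoc, le_div_iff₀ hN]
  have : lam * (G / Δ) * Δ = lam * G := by field_simp
  nlinarith

end RatioChain

section RatioMonotone

variable {n m : ℕ} (M : Matrix (Fin n) (Fin m) ℝ) {N lam F : ℝ}

lemma sub_sumTopSvalSq_two_mul_div_mono (hlam : 0 ≤ lam)
    (hyp : sval M 1 ^ 2 + sval M 2 ^ 2 ≤ lam * (F / N)) {k l : ℕ} (hkl : k ≤ l)
    (hl : 0 < N - lam * l) :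
    (F - sumTopSvalSq M (2 * k)) / (N - lam * k) ≤
      (F - sumTopSvalSq M (2 * l)) / (N - lam * l) := by
  set T := sumTopSvalSq M
  have hinc : ∀ j, T (2 * (j + 1)) - T (2 * j) ≤
      lam * ((F - T (2 * 0)) / (N - lam * (0 : ℕ))) := by
    intro j
    simp only [T, sumTopSvalSq_two_mul_succ, mul_zero, Nat.cast_zero, sub_zero]
    simp only [sumTopSvalSq, range_zero, sum_empty, sub_zero]
    linarith [sval_sq_le_sval_sq M le_rfl (show 1 ≤ 2 * j + 1 by omega),
      sval_sq_le_sval_sq M one_le_two (show 2 ≤ 2 * j + 2 by omega)]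
  have hk : 0 < N - lam * k := hl.trans_le (by gcongr)
  have h0k := div_le_div_of_increments_le (T := fun j => T (2 * j)) hlam (Nat.zero_le k) hk
    fun j _ _ => hinc j
  exact div_le_div_of_increments_le (T := fun j => T (2 * j)) hlam hkl hl
    fun j _ _ => (hinc j).trans (mul_le_mul_of_nonneg_left h0k hlam)

lemma sub_sumTopSvalSq_two_mul_div_le_min (hlam : 0 ≤ lam) {K k r : ℕ} (hk : 1 ≤ k)
    (hkr : k ≤ r) (hkK : 2 * k + 2 ≤ K) (hr : 0 < N - lam * r)
    (hF : 0 ≤ F - sumTopSvalSq M (2 * k))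
    (hyp : N / ((F - sumTopSvalSq M (2 * k)) /
      (sval M (2 * k + 1) ^ 2 + sval M (2 * k + 2) ^ 2) + k) ≤ lam) :
    (F - sumTopSvalSq M (2 * k)) / (N - lam * k) ≤
      (F - sumTopSvalSq M (min (2 * r) K)) / (N - lam * r) := by
  set T := sumTopSvalSq M
  have h2k : min (2 * k) K = 2 * k := min_eq_left (by omega)
  have hΔ : sval M (2 * k + 1) ^ 2 + sval M (2 * k + 2) ^ 2 ≤
      lam * ((F - T (2 * k)) / (N - lam * k)) :=
    le_mul_div_of_div_add_le hlam hF (by positivity) (by exact_mod_cast hk)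
      (hr.trans_le (by gcongr)) hyp
  have hinc : ∀ j, k ≤ j → T (min (2 * (j + 1)) K) - T (min (2 * j) K) ≤
      sval M (2 * k + 1) ^ 2 + sval M (2 * k + 2) ^ 2 :=
    fun j hj => (sumTopSvalSq_min_two_mul_succ_sub_le M K j).trans (add_le_add
      (sval_sq_le_sval_sq M (by omega) (by omega)) (sval_sq_le_sval_sq M (by omega) (by omega)))
  have h := div_le_div_of_increments_le (F := F) (T := fun j => T (min (2 * j) K)) hlam hkr hr
    fun j hj _ => (hinc j hj).trans (by rw [h2k]; exact hΔ)
  rwa [h2k] at h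

end RatioMonotone

theorem statement_12_general
    {n m q : ℕ}
    (E : Matrix (Fin n) (Fin m) ℝ) (P : Matrix (Fin n) (Fin n) ℝ)
    (hP2 : P * P = P) (hPt : P.transpose = P)
    (lam : ℝ) (hlam : 0 < lam)
    (hden : 0 < ((n * m : ℕ) : ℝ) - lam * (((min q m + 1) / 2 : ℕ) : ℝ)) :
    ((sval (P * E) 1) ^ 2 + (sval (P * E) 2) ^ 2 ≤ lam * (frob2 E / ((n * m : ℕ) : ℝ)) →
      ∀ k l : ℕ, k ≤ l → l ≤ min q m / 2 →
        frob2 (E - trunc (P * E) (2 * k)) / (((n * m : ℕ) : ℝ) - lam * k) ≤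
          frob2 (E - trunc (P * E) (2 * l)) / (((n * m : ℕ) : ℝ) - lam * l)) ∧
    (∀ k r : ℕ, 1 ≤ k → k ≤ r → 2 * k + 2 ≤ min q m →
      0 < ((n * m : ℕ) : ℝ) - lam * r →
      ((n * m : ℕ) : ℝ) /
          (frob2 (E - trunc (P * E) (2 * k)) /
              ((sval (P * E) (2 * k + 1)) ^ 2 + (sval (P * E) (2 * k + 2)) ^ 2) + k) ≤ lam →
      frob2 (E - trunc (P * E) (2 * k)) / (((n * m : ℕ) : ℝ) - lam * k) ≤
        frob2 (E - trunc (P * E) (min (2 * r) (min q m))) /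
          (((n * m : ℕ) : ℝ) - lam * r)) := by
  simp only [frob2_sub_trunc_mul_of_isProj hPt hP2]
  refine ⟨fun hyp k l hkl hl => ?_, fun k r hk hkr hkN hr hyp => ?_⟩
  · exact sub_sumTopSvalSq_two_mul_div_mono (P * E) hlam.le hyp hkl
      (hden.trans_le (by gcongr; omega))
  · refine sub_sumTopSvalSq_two_mul_div_le_min (P * E) hlam.le hk hkr hkN hr ?_ hyp
    rw [← frob2_sub_trunc_mul_of_isProj hPt hP2]
    exact frob2_nonneg _

theorem statement_12
    {n m q : ℕ}
    (E : Matrix (Fin n) (Fin m) ℝ) (P : Matrix (Fin n) (Fin n) ℝ)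
    (hP2 : P * P = P) (hPt : P.transpose = P) (hPq : P.rank = q)
    (lam : ℝ) (hlam : 0 < lam)
    (hden : 0 < ((n * m : ℕ) : ℝ) - lam * (((min q m + 1) / 2 : ℕ) : ℝ)) :
    ((sval (P * E) 1) ^ 2 + (sval (P * E) 2) ^ 2 ≤ lam * (frob2 E / ((n * m : ℕ) : ℝ)) →
      ∀ k l : ℕ, k ≤ l → l ≤ min q m / 2 →
        frob2 (E - trunc (P * E) (2 * k)) / (((n * m : ℕ) : ℝ) - lam * k) ≤
          frob2 (E - trunc (P * E) (2 * l)) / (((n * m : ℕ) : ℝ) - lam * l)) ∧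
    (∀ k r : ℕ, 1 ≤ k → k ≤ r → 2 * k + 2 ≤ min q m →
      0 < ((n * m : ℕ) : ℝ) - lam * r →
      ((n * m : ℕ) : ℝ) /
          (frob2 (E - trunc (P * E) (2 * k)) /
              ((sval (P * E) (2 * k + 1)) ^ 2 + (sval (P * E) (2 * k + 2)) ^ 2) + k) ≤ lam →
      frob2 (E - trunc (P * E) (2 * k)) / (((n * m : ℕ) : ℝ) - lam * k) ≤
        frob2 (E - trunc (P * E) (min (2 * r) (min q m))) /
          (((n * m : ℕ) : ℝ) - lam * r)) :=
  statement_12_general E P hP2 hPt lam hlam hden
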